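/- arXiv:1904.03592 — 2 statements merged into one kernel-verified Lean document; each statement's English description precedes it below -/
import Mathlib

section
/- Let F ∈ M_t(ℝ[x]) be a univariate matrix polynomial of degree d > 0 such that F(x) is positive definite for all x ∈ [-1,1]. Then there exist a positive integer N and positive definite matrices G_i ∈ M_t(ℝ), i = 0, …, N+d, such that F(x) = Σ_{i=0}^{N+d} G_i (1+x)^i (1-x)^{N+d-i}. -/
open Polynomial Finset Matrix

noncomputable def bc (n j k : ℕ) : ℝ := if j ≤ k then ((n-j).choose (k-j) : ℝ) else 0

lemma bernstein_basis_id (n j : ℕ) (hj : j ≤ n) :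
    (1 + X : Polynomial ℝ) ^ j * C ((2:ℝ) ^ (n - j)) =
      ∑ k ∈ range (n+1), C (bc n j k) * ((1 + X) ^ k * (1 - X) ^ (n - k)) := by
  have h2 : (C ((2:ℝ)) : Polynomial ℝ) = (1 + X) + (1 - X) := by rw [map_ofNat]; ring
  have hC : C ((2:ℝ) ^ (n - j)) =
      ∑ i ∈ range (n - j + 1),
        (1 + X : Polynomial ℝ) ^ i * (1 - X) ^ (n - j - i) * ((n-j).choose i : Polynomial ℝ) := by
    rw [map_pow, h2, add_pow]
  rw [hC, Finset.mul_sum]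
  have hz : ∀ k ∈ range (n+1), k ∉ Finset.Icc j n →
      C (bc n j k) * ((1 + X : Polynomial ℝ) ^ k * (1 - X) ^ (n - k)) = 0 := by
    intro k hk hk2
    simp only [mem_range] at hk
    simp only [Finset.mem_Icc] at hk2
    have : ¬ j ≤ k := by omega
    simp [bc, this]
  rw [← Finset.sum_subset (fun k hk => by simp only [mem_range, Finset.mem_Icc] at *; omega) hz]
  rw [show Finset.Icc j n = Finset.Ico j (n+1) from by rw [Finset.Ico_add_one_right_eq_Icc], Finset.sum_Ico_eq_sum_range]
  have hn : n + 1 - j = n - j + 1 := by omega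
  rw [hn]
  apply Finset.sum_congr rfl
  intro m hm
  simp only [mem_range] at hm
  have h1 : bc n j (j + m) = ((n-j).choose m : ℝ) := by simp [bc]
  have h2 : n - (j + m) = n - j - m := by omega
  rw [h1, h2, Polynomial.C_eq_natCast]
  push_cast
  ring

lemma bc_eq (n j k : ℕ) (hj : j ≤ n) (hk : k ≤ n) :
    bc n j k = (n.choose k : ℝ) * ∏ m ∈ range j, (((k:ℝ) - m) / ((n:ℝ) - m)) := by
  induction j with
  | zero => simp [bc]
  | succ j ih =>
    have hj' : j ≤ n := by omega
    rw [prod_range_succ, ← mul_assoc, ← ih hj']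
    by_cases hjk : j + 1 ≤ k
    · have hbc : bc n j k = ((n-j).choose (k-j) : ℝ) := by simp [bc]; intro h; omega
      have hbc' : bc n (j+1) k = ((n-j-1).choose (k-j-1) : ℝ) := by
        simp only [bc, if_pos hjk]
        congr 1 <;> omega
      rw [hbc, hbc']
      have hnj : ((n:ℝ) - j) ≠ 0 := by
        have : (j:ℝ) < n := by exact_mod_cast (by omega : j < n)
        linarith
      rw [mul_div_assoc', eq_div_iff hnj]
      have e1 : ((k:ℝ) - j) = ((k - j : ℕ) : ℝ) := by
        have : (j:ℝ) ≤ k := by exact_mod_cast (by omega : j ≤ k)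
        push_cast [Nat.cast_sub (by omega : j ≤ k)]; ring
      have e2 : ((n:ℝ) - j) = ((n - j : ℕ) : ℝ) := by
        push_cast [Nat.cast_sub (by omega : j ≤ n)]; ring
      rw [e1, e2]
      have key : (n - j - 1).choose (k - j - 1) * (n - j) = (n - j).choose (k - j) * (k - j) := by
        obtain ⟨a, ha⟩ : ∃ a, n - j = a + 1 := ⟨n - j - 1, by omega⟩
        obtain ⟨b, hb⟩ : ∃ b, k - j = b + 1 := ⟨k - j - 1, by omega⟩
        rw [ha, hb, Nat.add_sub_cancel, Nat.add_sub_cancel]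
        simpa [Nat.succ_eq_add_one, mul_comm] using Nat.add_one_mul_choose_eq a b
      exact_mod_cast key
    · have h0 : bc n (j+1) k = 0 := by simp [bc]; omega
      rw [h0]
      rcases le_or_gt j k with h | h
      · have : k = j := by omega
        subst this
        simp
      · have : bc n j k = 0 := by simp [bc]; omega
        rw [this]; ring

lemma abs_prod_sub_prod_le (j : ℕ) (a b : ℕ → ℝ)
    (ha : ∀ m < j, 0 ≤ a m ∧ a m ≤ 1) (hb : ∀ m < j, 0 ≤ b m ∧ b m ≤ 1) :
    |∏ m ∈ range j, a m - ∏ m ∈ range j, b m| ≤ ∑ m ∈ range j, |a m - b m| := by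
  induction j with
  | zero => simp
  | succ j ih =>
    have ha' : ∀ m < j, 0 ≤ a m ∧ a m ≤ 1 := fun m hm => ha m (by omega)
    have hb' : ∀ m < j, 0 ≤ b m ∧ b m ≤ 1 := fun m hm => hb m (by omega)
    have hPa : 0 ≤ ∏ m ∈ range j, a m := prod_nonneg (fun m hm => (ha' m (mem_range.mp hm)).1)
    have hPb0 : 0 ≤ ∏ m ∈ range j, b m := prod_nonneg (fun m hm => (hb' m (mem_range.mp hm)).1)
    have hPb1 : ∏ m ∈ range j, b m ≤ 1 :=
      prod_le_one (fun m hm => (hb' m (mem_range.mp hm)).1) (fun m hm => (hb' m (mem_range.mp hm)).2)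
    rw [prod_range_succ, prod_range_succ, sum_range_succ]
    have haj := ha j (by omega)
    calc |(∏ m ∈ range j, a m) * a j - (∏ m ∈ range j, b m) * b j|
        ≤ |(∏ m ∈ range j, a m) * a j - (∏ m ∈ range j, b m) * a j| +
          |(∏ m ∈ range j, b m) * a j - (∏ m ∈ range j, b m) * b j| := abs_sub_le _ _ _
      _ ≤ (∑ m ∈ range j, |a m - b m|) + |a j - b j| := by
          gcongr ?_ + ?_
          · rw [← sub_mul, abs_mul]
            calc |∏ m ∈ range j, a m - ∏ m ∈ range j, b m| * |a j|
                ≤ |∏ m ∈ range j, a m - ∏ m ∈ range j, b m| * 1 := by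
                  gcongr
                  rw [abs_le]; constructor <;> linarith [haj.1, haj.2]
              _ ≤ ∑ m ∈ range j, |a m - b m| := by rw [mul_one]; exact ih ha' hb'
          · rw [← mul_sub, abs_mul]
            calc |∏ m ∈ range j, b m| * |a j - b j| ≤ 1 * |a j - b j| := by
                  gcongr
                  rw [abs_le]; constructor <;> linarith
              _ = |a j - b j| := one_mul _

lemma ratio_bound (N d k j : ℕ) (hN : 0 < N) (hd : 0 < d) (hj : j ≤ d) (hk : k ≤ N + d) :
    |(∏ m ∈ range j, (((k:ℝ) - m) / (((N:ℝ) + d) - m))) - ((k:ℝ)/((N:ℝ)+d))^j|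
      ≤ (d:ℝ)^2 / N := by
  set nn : ℝ := (N:ℝ) + d with hnn
  have hn0 : 0 < nn := by positivity
  have hNpos : (0:ℝ) < N := by exact_mod_cast hN
  have hdpos : (0:ℝ) < d := by exact_mod_cast hd
  have hkn : (k:ℝ) ≤ nn := by rw [hnn]; exact_mod_cast hk
  rcases le_or_gt j k with hjk | hjk
  · -- j ≤ k : use product diff lemma
    have key := abs_prod_sub_prod_le j (fun m => ((k:ℝ) - m) / (nn - m)) (fun m => (k:ℝ)/nn)
      (by
        intro m hm
        have hm' : (m:ℝ) < d := by exact_mod_cast lt_of_lt_of_le hm hj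
        have hmk : (m:ℝ) ≤ k := by exact_mod_cast le_trans (by omega : m ≤ j) hjk
        have hd1 : (0:ℝ) < nn - m := by rw [hnn]; linarith
        constructor
        · apply div_nonneg (by linarith) (by linarith)
        · rw [div_le_one hd1]; linarith)
      (by
        intro m hm
        constructor
        · positivity
        · rw [div_le_one hn0]; linarith)
    have hsum : ∑ m ∈ range j, |((k:ℝ) - m) / (nn - m) - (k:ℝ)/nn| ≤ (d:ℝ)^2 / N := by
      have hterm : ∀ m ∈ range j, |((k:ℝ) - m) / (nn - m) - (k:ℝ)/nn| ≤ (d:ℝ)/N := by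
        intro m hm
        have hmj : m < j := mem_range.mp hm
        have hm' : (m:ℝ) < d := by exact_mod_cast lt_of_lt_of_le hmj hj
        have hd1 : (0:ℝ) < nn - m := by rw [hnn]; linarith
        have hNm : (N:ℝ) ≤ nn - m := by rw [hnn]; linarith
        have heq : ((k:ℝ) - m) / (nn - m) - (k:ℝ)/nn = ((m:ℝ) * ((k:ℝ) - nn)) / ((nn - m) * nn) := by
          field_simp
          ring
        rw [heq, abs_div, abs_mul]
        have h1 : |(m:ℝ)| = (m:ℝ) := abs_of_nonneg (by positivity)
        have h2 : |(k:ℝ) - nn| = nn - (k:ℝ) := by rw [abs_sub_comm]; exact abs_of_nonneg (by linarith)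
        have h3 : |(nn - m) * nn| = (nn - m) * nn := abs_of_nonneg (by positivity)
        rw [h1, h2, h3, div_le_div_iff₀ (by positivity) hNpos]
        have e0 : (0:ℝ) ≤ nn - k := by linarith
        calc (m:ℝ)*(nn-(k:ℝ))*N ≤ (d:ℝ)*(nn-(k:ℝ))*N := by gcongr
          _ ≤ (d:ℝ)*nn*(nn-(m:ℝ)) := by
              gcongr <;> linarith
          _ = (d:ℝ)*((nn-(m:ℝ))*nn) := by ring
      calc ∑ m ∈ range j, |((k:ℝ) - m) / (nn - m) - (k:ℝ)/nn|
          ≤ ∑ _m ∈ range j, (d:ℝ)/N := Finset.sum_le_sum hterm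
        _ = (j:ℝ) * ((d:ℝ)/N) := by rw [Finset.sum_const, card_range]; simp
        _ ≤ (d:ℝ) * ((d:ℝ)/N) := by
            have : (j:ℝ) ≤ d := by exact_mod_cast hj
            gcongr
        _ = (d:ℝ)^2/N := by ring
    calc _ ≤ ∑ m ∈ range j, |((k:ℝ) - m) / (nn - m) - (k:ℝ)/nn| := by
            convert key using 3
            rw [Finset.prod_const, card_range]
      _ ≤ _ := hsum
  · -- k < j : the product is 0
    have hz : (∏ m ∈ range j, (((k:ℝ) - m) / (nn - m))) = 0 := by
      apply Finset.prod_eq_zero (mem_range.mpr hjk)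
      simp
    rw [hz, zero_sub, abs_neg, abs_of_nonneg (by positivity)]
    have hj1 : 1 ≤ j := by omega
    have hbase : (k:ℝ)/nn ≤ 1 := by rw [div_le_one hn0]; linarith
    calc ((k:ℝ)/nn)^j ≤ ((k:ℝ)/nn)^1 := pow_le_pow_of_le_one (by positivity) hbase hj1
      _ = (k:ℝ)/nn := pow_one _
      _ ≤ (d:ℝ)/N := by
          rw [div_le_div_iff₀ hn0 hNpos]
          have hkd : (k:ℝ) < d := by exact_mod_cast lt_of_lt_of_le hjk hj
          nlinarith
      _ ≤ (d:ℝ)^2/N := by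
          rw [div_le_div_iff₀ hNpos hNpos]
          have hd1' : (1:ℝ) ≤ d := by exact_mod_cast hd
          nlinarith [mul_nonneg (mul_nonneg hdpos.le hNpos.le) (sub_nonneg.mpr hd1')]

lemma exists_delta {t : ℕ} (F : Matrix (Fin t) (Fin t) (Polynomial ℝ)) (ht : 0 < t)
    (hpos : ∀ x ∈ Set.Icc (-1:ℝ) 1, (F.map (Polynomial.eval x)).PosDef) :
    ∃ δ : ℝ, 0 < δ ∧ ∀ x ∈ Set.Icc (-1:ℝ) 1, ∀ v : Fin t → ℝ, ‖v‖ = 1 →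
      δ ≤ v ⬝ᵥ ((F.map (Polynomial.eval x)) *ᵥ v) := by
  haveI : Nonempty (Fin t) := ⟨⟨0, ht⟩⟩
  set g : ℝ × (Fin t → ℝ) → ℝ := fun p => p.2 ⬝ᵥ ((F.map (Polynomial.eval p.1)) *ᵥ p.2) with hgdef
  have hg : Continuous g := by
    have : g = fun p : ℝ × (Fin t → ℝ) =>
        ∑ i, p.2 i * ∑ j, (Polynomial.eval p.1 (F i j)) * p.2 j := by
      funext p
      simp [hgdef, dotProduct, Matrix.mulVec, Matrix.map_apply]
    rw [this]
    apply continuous_finset_sum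
    intro i _
    apply Continuous.mul ((continuous_apply i).comp continuous_snd)
    apply continuous_finset_sum
    intro j _
    exact ((F i j).continuous.comp continuous_fst).mul ((continuous_apply j).comp continuous_snd)
  set K : Set (ℝ × (Fin t → ℝ)) := Set.Icc (-1:ℝ) 1 ×ˢ Metric.sphere (0 : Fin t → ℝ) 1 with hKdef
  have hK : IsCompact K := (isCompact_Icc).prod (isCompact_sphere 0 1)
  obtain ⟨v₀, hv₀⟩ : (Metric.sphere (0 : Fin t → ℝ) 1).Nonempty :=
    NormedSpace.sphere_nonempty.2 zero_le_one
  have hKne : K.Nonempty := ⟨(0, v₀), by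
    constructor
    · constructor <;> norm_num
    · exact hv₀⟩
  obtain ⟨⟨x₀, u₀⟩, hmem, hmin⟩ := hK.exists_isMinOn hKne hg.continuousOn
  obtain ⟨hx₀, hu₀⟩ := hmem
  have hu₀n : ‖u₀‖ = 1 := mem_sphere_zero_iff_norm.mp hu₀
  have hu₀ne : u₀ ≠ 0 := by
    intro h
    rw [h, norm_zero] at hu₀n
    norm_num at hu₀n
  refine ⟨g (x₀, u₀), ?_, ?_⟩
  · have := (hpos x₀ hx₀).dotProduct_mulVec_pos hu₀ne
    simpa [hgdef, star_trivial] using this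
  · intro x hx v hv
    exact hmin (Set.mk_mem_prod hx (mem_sphere_zero_iff_norm.mpr hv))

lemma rep_basis (d : ℕ) (P : Polynomial ℝ) (hdeg : P.natDegree ≤ d) :
    P = ∑ j ∈ range (d+1), C ((P.comp (X - 1)).coeff j) * (1 + X)^j := by
  have h1 : (P.comp (X - 1)).natDegree ≤ d := by
    rw [Polynomial.natDegree_comp]
    have hx1 : (X - 1 : Polynomial ℝ).natDegree = 1 := by
      simpa using Polynomial.natDegree_X_sub_C (1:ℝ)
    rw [hx1, mul_one]; exact hdeg
  have h2 : P.comp (X - 1) = ∑ j ∈ range (d+1), C ((P.comp (X - 1)).coeff j) * X^j := by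
    conv_lhs => rw [Polynomial.as_sum_range' (P.comp (X - 1)) (d+1) (by omega)]
    exact Finset.sum_congr rfl fun j _ => (Polynomial.C_mul_X_pow_eq_monomial).symm
  have h3 : P = (P.comp (X - 1)).comp (1 + X) := by
    rw [Polynomial.comp_assoc]
    have : (X - 1 : Polynomial ℝ).comp (1 + X) = X := by
      simp [Polynomial.sub_comp]
    rw [this, Polynomial.comp_X]
  conv_lhs => rw [h3, h2]
  rw [show ∀ Q : Polynomial ℝ, Q.comp (1+X) = Polynomial.compRingHom (1+X) Q from fun _ => rfl,
    map_sum]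
  exact Finset.sum_congr rfl fun j _ => by
    simp [Polynomial.compRingHom, Polynomial.mul_comp, Polynomial.pow_comp]

lemma dot_sum_mulVec {t : ℕ} (s : Finset ℕ) (c : ℕ → ℝ) (A : ℕ → Matrix (Fin t) (Fin t) ℝ)
    (w : Fin t → ℝ) :
    w ⬝ᵥ ((∑ j ∈ s, c j • A j) *ᵥ w) = ∑ j ∈ s, c j * (w ⬝ᵥ (A j *ᵥ w)) := by
  classical
  induction s using Finset.induction_on with
  | empty => simp
  | insert _ _ h ih =>
    rw [Finset.sum_insert h, Matrix.add_mulVec, dotProduct_add, Finset.sum_insert h, ih,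
      Matrix.smul_mulVec, dotProduct_smul, smul_eq_mul]

/-- Bernstein-type representation on `[-1,1]` for matrix polynomials:
if `F` has degree `d > 0` and `F(x) ≻ 0` on `[-1,1]`, then
`F = Σ_{i=0}^{N+d} Gᵢ (1+x)^i (1-x)^{N+d-i}` with all `Gᵢ` positive definite. -/
theorem posDef_on_Icc_neg_one_one_rep (t d : ℕ) (hd : 0 < d)
    (F : Matrix (Fin t) (Fin t) (Polynomial ℝ))
    (hdegle : ∀ i j, (F i j).natDegree ≤ d)
    (hdeg : ∃ i j, (F i j).coeff d ≠ 0)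
    (hpos : ∀ x ∈ Set.Icc (-1 : ℝ) 1, (F.map (Polynomial.eval x)).PosDef) :
    ∃ N : ℕ, 0 < N ∧ ∃ G : ℕ → Matrix (Fin t) (Fin t) ℝ,
      (∀ i ∈ Finset.range (N + d + 1), (G i).PosDef) ∧
      F = ∑ i ∈ Finset.range (N + d + 1),
        (((1 + Polynomial.X) ^ i * (1 - Polynomial.X) ^ (N + d - i) : Polynomial ℝ)) •
          (G i).map Polynomial.C := by
  classical
  obtain ⟨p₀, q₀, -⟩ := hdeg
  have ht : 0 < t := p₀.pos
  -- coefficients of F in the basis (1+X)^j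
  set a : ℕ → Matrix (Fin t) (Fin t) ℝ := fun j p q => ((F p q).comp (X - 1)).coeff j with ha
  have hFrep : ∀ p q, F p q = ∑ j ∈ range (d+1), C (a j p q) * (1 + X)^j :=
    fun p q => rep_basis d (F p q) (hdegle p q)
  -- symmetry of F
  have hsym : ∀ p q, F p q = F q p := by
    intro p q
    apply Polynomial.eq_of_infinite_eval_eq
    refine Set.Infinite.mono ?_ (Set.Icc_infinite (show (-1:ℝ) < 1 by norm_num))
    intro x hx
    have h1 := (hpos x hx).1
    have h2 := congrFun (congrFun h1 p) q
    simp only [Matrix.conjTranspose_apply, Matrix.map_apply, star_trivial] at h2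
    exact h2.symm
  have hasym : ∀ j p q, a j p q = a j q p := by
    intro j p q
    simp only [ha]
    rw [hsym p q]
  -- evaluation formula
  have heval : ∀ (x : ℝ) p q, Polynomial.eval x (F p q)
      = ∑ j ∈ range (d+1), a j p q * (1+x)^j := by
    intro x p q
    conv_lhs => rw [hFrep p q]
    simp [Polynomial.eval_finset_sum]
  -- uniform positivity
  obtain ⟨δ, hδ, hδle⟩ := exists_delta F ht hpos
  -- constants
  set S : ℕ → ℝ := fun j => ∑ p, ∑ q, |a j p q| with hS
  have hS0 : ∀ j, 0 ≤ S j := fun j =>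
    Finset.sum_nonneg fun p _ => Finset.sum_nonneg fun q _ => abs_nonneg _
  set Cs : ℝ := ∑ j ∈ range (d+1), S j * 2^j with hCs
  have hCs0 : 0 ≤ Cs := Finset.sum_nonneg fun j _ => mul_nonneg (hS0 j) (by positivity)
  obtain ⟨N₀, hN₀⟩ := exists_nat_gt (Cs * d^2 / δ)
  refine ⟨N₀ + 1, Nat.succ_pos _, ?_⟩
  set N := N₀ + 1 with hN
  have hNposR : (0:ℝ) < N := by exact_mod_cast Nat.succ_pos N₀
  have hNbig : Cs * (d:ℝ)^2 / N < δ := by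
    have h1 : Cs * (d:ℝ)^2 / δ < (N:ℝ) := lt_of_lt_of_le hN₀ (by exact_mod_cast Nat.le_succ N₀)
    rw [div_lt_iff₀ hδ] at h1
    rw [div_lt_iff₀ hNposR]
    linarith
  set n := N + d with hn
  have hdn : d ≤ n := by omega
  have hnReq : ((n:ℕ):ℝ) = (N:ℝ) + d := by push_cast [hn]; ring
  -- the matrices G
  set G : ℕ → Matrix (Fin t) (Fin t) ℝ :=
    fun k => ∑ j ∈ range (d+1), ((2:ℝ)^j * bc n j k / 2^n) • a j with hG
  refine ⟨G, ?_, ?_⟩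
  · -- positive definiteness
    intro k hk
    rw [mem_range] at hk
    have hkn : k ≤ n := by omega
    have hquad : ∀ w : Fin t → ℝ, w ⬝ᵥ (G k *ᵥ w)
        = ∑ j ∈ range (d+1), ((2:ℝ)^j * bc n j k / 2^n) * (w ⬝ᵥ (a j *ᵥ w)) := by
      intro w
      rw [hG]
      exact dot_sum_mulVec _ _ _ w
    have hunit : ∀ w : Fin t → ℝ, ‖w‖ = 1 → 0 < w ⬝ᵥ (G k *ᵥ w) := by
      intro w hw
      rw [hquad w]
      set ψ : ℕ → ℝ := fun j => w ⬝ᵥ (a j *ᵥ w) with hψ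
      have hψbd : ∀ j, |ψ j| ≤ S j := by
        intro j
        have hwp : ∀ p, |w p| ≤ 1 := by
          intro p
          have := norm_le_pi_norm w p
          rwa [hw, Real.norm_eq_abs] at this
        calc |ψ j| = |∑ p, ∑ q, w p * (a j p q * w q)| := by
              simp [hψ, dotProduct, Matrix.mulVec, Finset.mul_sum]
          _ ≤ ∑ p, |∑ q, w p * (a j p q * w q)| := Finset.abs_sum_le_sum_abs _ _
          _ ≤ ∑ p, ∑ q, |w p * (a j p q * w q)| :=
              Finset.sum_le_sum fun p _ => Finset.abs_sum_le_sum_abs _ _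
          _ ≤ S j := by
            rw [hS]
            apply Finset.sum_le_sum
            intro p _
            apply Finset.sum_le_sum
            intro q _
            rw [abs_mul, abs_mul]
            calc |w p| * (|a j p q| * |w q|) ≤ 1 * (|a j p q| * 1) := by
                  apply mul_le_mul (hwp p) ?_ (by positivity) zero_le_one
                  exact mul_le_mul_of_nonneg_left (hwp q) (abs_nonneg _)
              _ = |a j p q| := by ring
      have step1 : ∀ j ∈ range (d+1), (2:ℝ)^j * bc n j k / 2^n * ψ j
          = ((n.choose k : ℝ)/2^n) *
            (ψ j * 2^j * ∏ m ∈ range j, (((k:ℝ) - m) / (((N:ℝ) + d) - m))) := by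
        intro j hj
        rw [mem_range] at hj
        rw [bc_eq n j k (by omega) hkn, hnReq]
        ring
      rw [Finset.sum_congr rfl step1, ← Finset.mul_sum]
      apply mul_pos
      · have := Nat.choose_pos hkn
        positivity
      -- now the main sum
      set x : ℝ := 2*(k:ℝ)/((N:ℝ)+d) - 1 with hx
      have hnR0 : (0:ℝ) < (N:ℝ) + d := by positivity
      have hkR : (k:ℝ) ≤ (N:ℝ) + d := by rw [← hnReq]; exact_mod_cast hkn
      have hxmem : x ∈ Set.Icc (-1:ℝ) 1 := by
        constructor
        · rw [hx]
          have : 0 ≤ 2*(k:ℝ)/((N:ℝ)+d) := by positivity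
          linarith
        · rw [hx]
          have : 2*(k:ℝ)/((N:ℝ)+d) ≤ 2 := by
            rw [div_le_iff₀ hnR0]; linarith
          linarith
      have hgx : δ ≤ w ⬝ᵥ ((F.map (Polynomial.eval x)) *ᵥ w) := hδle x hxmem w hw
      have hmap : F.map (Polynomial.eval x) = ∑ j ∈ range (d+1), ((1+x)^j) • a j := by
        ext p q
        simp [Matrix.map_apply, heval x p q, Matrix.sum_apply, smul_eq_mul, mul_comm]
      have hgev : w ⬝ᵥ ((F.map (Polynomial.eval x)) *ᵥ w)
          = ∑ j ∈ range (d+1), ψ j * 2^j * ((k:ℝ)/((N:ℝ)+d))^j := by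
        rw [hmap, dot_sum_mulVec]
        apply Finset.sum_congr rfl
        intro j _
        have hx1 : 1 + x = 2*((k:ℝ)/((N:ℝ)+d)) := by
          rw [hx]; field_simp; ring
        rw [hx1, mul_pow]
        rw [hψ]
        ring
      have hdiff : |(∑ j ∈ range (d+1), ψ j * 2^j * ∏ m ∈ range j, (((k:ℝ) - m) / (((N:ℝ) + d) - m)))
          - ∑ j ∈ range (d+1), ψ j * 2^j * ((k:ℝ)/((N:ℝ)+d))^j| ≤ Cs * (d:ℝ)^2 / N := by
        rw [← Finset.sum_sub_distrib]
        calc |∑ j ∈ range (d+1), (ψ j * 2^j * ∏ m ∈ range j, (((k:ℝ) - m) / (((N:ℝ) + d) - m))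
              - ψ j * 2^j * ((k:ℝ)/((N:ℝ)+d))^j)|
            ≤ ∑ j ∈ range (d+1), |ψ j * 2^j * ∏ m ∈ range j, (((k:ℝ) - m) / (((N:ℝ) + d) - m))
              - ψ j * 2^j * ((k:ℝ)/((N:ℝ)+d))^j| := Finset.abs_sum_le_sum_abs _ _
          _ ≤ ∑ j ∈ range (d+1), S j * 2^j * ((d:ℝ)^2/N) := by
              apply Finset.sum_le_sum
              intro j hj
              rw [mem_range] at hj
              have hrb := ratio_bound N d k j (Nat.succ_pos N₀) hd (by omega)
                (by rw [hn] at hkn; exact hkn)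
              calc |ψ j * 2^j * ∏ m ∈ range j, (((k:ℝ) - m) / (((N:ℝ) + d) - m))
                  - ψ j * 2^j * ((k:ℝ)/((N:ℝ)+d))^j|
                  = |ψ j| * 2^j * |(∏ m ∈ range j, (((k:ℝ) - m) / (((N:ℝ) + d) - m)))
                    - ((k:ℝ)/((N:ℝ)+d))^j| := by
                    rw [← mul_sub, abs_mul, abs_mul,
                      abs_of_nonneg (show (0:ℝ) ≤ (2:ℝ)^j by positivity)]
                _ ≤ S j * 2^j * ((d:ℝ)^2/N) := by
                    gcongr
                    · exact hψbd j
          _ = Cs * (d:ℝ)^2 / N := by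
              rw [hCs, Finset.sum_mul, Finset.sum_div]
              exact Finset.sum_congr rfl fun j _ => by ring
      have habs := abs_sub_le_iff.mp hdiff
      have := habs.2
      -- T ≥ gx - Cs d²/N > 0
      have hT : (∑ j ∈ range (d+1), ψ j * 2^j * ∏ m ∈ range j, (((k:ℝ) - m) / (((N:ℝ) + d) - m)))
          ≥ δ - Cs * (d:ℝ)^2/N := by
        rw [hgev] at hgx
        linarith
      linarith
    -- conclude PosDef
    refine Matrix.PosDef.of_dotProduct_mulVec_pos ?_ ?_
    · -- Hermitian
      show (G k)ᴴ = G k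
      ext p q
      simp only [Matrix.conjTranspose_apply, star_trivial, hG, Matrix.sum_apply,
        Matrix.smul_apply, smul_eq_mul]
      exact Finset.sum_congr rfl fun j _ => by rw [hasym j q p]
    · intro v hv
      have hvn : ‖v‖ ≠ 0 := by simp [hv]
      have hvpos : 0 < ‖v‖ := lt_of_le_of_ne (norm_nonneg v) (Ne.symm hvn)
      set w : Fin t → ℝ := ‖v‖⁻¹ • v with hwdef
      have hw : ‖w‖ = 1 := by
        rw [hwdef, norm_smul, norm_inv, norm_norm, inv_mul_cancel₀ hvn]
      have hpos' := hunit w hw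
      rw [hwdef] at hpos'
      rw [Matrix.mulVec_smul, smul_dotProduct, dotProduct_smul] at hpos'
      have hq : 0 < v ⬝ᵥ (G k *ᵥ v) := by
        have hinv : 0 < ‖v‖⁻¹ := inv_pos.mpr hvpos
        simp only [smul_eq_mul] at hpos'
        by_contra h
        push_neg at h
        have h1 : ‖v‖⁻¹ * (v ⬝ᵥ (G k *ᵥ v)) ≤ 0 := mul_nonpos_of_nonneg_of_nonpos hinv.le h
        have h2 : ‖v‖⁻¹ * (‖v‖⁻¹ * (v ⬝ᵥ (G k *ᵥ v))) ≤ 0 :=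
          mul_nonpos_of_nonneg_of_nonpos hinv.le h1
        linarith
      simpa [star_trivial] using hq
  · -- the representation identity
    refine Matrix.ext fun p q => ?_
    rw [hFrep p q]
    have hrhs : (∑ i ∈ Finset.range (n + 1),
        (((1 + X) ^ i * (1 - X) ^ (n - i) : Polynomial ℝ)) • (G i).map C) p q
        = ∑ k ∈ range (n+1), ∑ j ∈ range (d+1),
            (C ((2:ℝ)^j * bc n j k / 2^n) * C (a j p q)) * ((1 + X)^k * (1 - X)^(n - k)) := by
      simp only [Matrix.sum_apply, Matrix.smul_apply, Matrix.map_apply, smul_eq_mul, hG,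
        Matrix.sum_apply, Matrix.smul_apply, smul_eq_mul]
      apply Finset.sum_congr rfl
      intro k _
      rw [map_sum]
      rw [Finset.mul_sum]
      apply Finset.sum_congr rfl
      intro j _
      rw [_root_.map_mul]
      ring
    rw [hrhs, Finset.sum_comm]
    refine (Finset.sum_congr rfl fun j hj => ?_).symm
    rw [mem_range] at hj
    have hjn : j ≤ n := by omega
    have hb := bernstein_basis_id n j hjn
    calc ∑ k ∈ range (n+1), (C ((2:ℝ)^j * bc n j k / 2^n) * C (a j p q)) * ((1 + X)^k * (1 - X)^(n - k))
        = (C ((2:ℝ)^j / 2^n) * C (a j p q)) *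
          ∑ k ∈ range (n+1), C (bc n j k) * ((1 + X)^k * (1 - X)^(n - k)) := by
          rw [Finset.mul_sum]
          apply Finset.sum_congr rfl
          intro k _
          rw [show C ((2:ℝ)^j * bc n j k / 2^n) = C ((2:ℝ)^j / 2^n) * C (bc n j k) from by
            rw [← _root_.map_mul]; congr 1; ring]
          ring
      _ = C (a j p q) * (1 + X)^j := by
          rw [← hb]
          have h2n : (2:ℝ)^j / 2^n * ((2:ℝ)^(n-j)) = 1 := by
            rw [div_mul_eq_mul_div, ← pow_add]
            have : j + (n - j) = n := by omega
            rw [this]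
            field_simp
          calc C ((2:ℝ)^j / 2^n) * C (a j p q) * ((1 + X)^j * C ((2:ℝ)^(n-j)))
              = C ((2:ℝ)^j / 2^n * (2:ℝ)^(n-j)) * C (a j p q) * (1 + X)^j := by
                rw [_root_.map_mul]; ring
            _ = C (a j p q) * (1 + X)^j := by rw [h2n, Polynomial.C_1, one_mul]
end

section
/- Let F ∈ S_t(ℝ[x]) be a symmetric matrix polynomial of degree d such that F(x) is positive definite for all x ∈ [0,1]. Then there exist a positive integer N and positive definite matrices G_i ∈ M_t(ℝ), i = 0, …, N+d, such that F(x) = Σ_{i=0}^{N+d} G_i x^i (1-x)^{N+d-i}. -/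
/-!
With `n = N + d`, let `b ν = n.choose ν • xᵛ (1 - x)ⁿ⁻ᵛ` be the Bernstein basis of degree `n`.
Because `∑ ν, ν.descFactorial k • b ν = n.descFactorial k • xᵏ`, a polynomial `p` of degree at
most `n` equals `∑ ν, c ν p • b ν`, where `c ν p = ∑ k, ν.descFactorial k / n.descFactorial k * pₖ`
is `bernsteinCoeff n ν p`. For `k ≤ d` that weight is a product of `k` numbers in `[0, 1]`, each
within `d / N` of `ν / n`, so `c ν p` differs from `p (ν / n)` by at most `d² / N * ∑ₖ |pₖ|`.
Applied entrywise to `F`, this makes `c ν F` uniformly close to `F (ν / n)`. As `x ↦ F x` is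
uniformly positive definite on the compact `[0, 1]`, `c ν F` is positive definite for `N` large,
and `G ν = n.choose ν • c ν F`.
-/

open Polynomial Finset Matrix

theorem Nat.descFactorial_mul_choose_add (n k m : ℕ) :
    (k + m).descFactorial k * n.choose (k + m) = n.descFactorial k * (n - k).choose m := by
  rw [Nat.descFactorial_eq_factorial_mul_choose, Nat.descFactorial_eq_factorial_mul_choose,
    mul_assoc, mul_assoc, mul_comm ((k + m).choose k), Nat.choose_mul le_self_add,
    Nat.add_sub_cancel_left]

theorem bernsteinPolynomial.descFactorial_smul_add (R : Type*) [CommRing R] (n k m : ℕ) :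
    (k + m).descFactorial k • bernsteinPolynomial R n (k + m) =
      n.descFactorial k • (X ^ k * bernsteinPolynomial R (n - k) m) := by
  simp only [bernsteinPolynomial, nsmul_eq_mul, Nat.sub_sub, pow_add]
  have h := congrArg (Nat.cast : ℕ → R[X]) (Nat.descFactorial_mul_choose_add n k m)
  push_cast at h
  linear_combination (X ^ k * X ^ m * (1 - X) ^ (n - (k + m))) * h

theorem bernsteinPolynomial.sum_descFactorial_smul (R : Type*) [CommRing R] (n k : ℕ) :
    ∑ ν ∈ range (n + 1), ν.descFactorial k • bernsteinPolynomial R n ν =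
      n.descFactorial k • X ^ k := by
  rcases le_or_gt k n with hk | hk
  · rw [show n + 1 = k + (n - k + 1) by omega, sum_range_add,
      sum_eq_zero fun ν hν => by
        rw [Nat.descFactorial_eq_zero_iff_lt.mpr (mem_range.mp hν), zero_smul]]
    simp_rw [descFactorial_smul_add, ← smul_sum, ← mul_sum, bernsteinPolynomial.sum, zero_add,
      mul_one]
  · rw [Nat.descFactorial_eq_zero_iff_lt.mpr hk, zero_smul]
    exact sum_eq_zero fun ν hν => by
      rw [Nat.descFactorial_eq_zero_iff_lt.mpr ((mem_range.mp hν).trans_le hk), zero_smul]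

noncomputable def bernsteinCoeff {K : Type*} [Field K] (n ν : ℕ) (p : K[X]) : K :=
  ∑ k ∈ range (n + 1), (ν.descFactorial k : K) / n.descFactorial k * p.coeff k

section CharZero

variable {K : Type*} [Field K] [CharZero K]

theorem bernsteinPolynomial.sum_C_descFactorial_div_mul {n k : ℕ} (hk : k ≤ n) :
    ∑ ν ∈ range (n + 1), C ((ν.descFactorial k : K) / n.descFactorial k) *
      bernsteinPolynomial K n ν = X ^ k := by
  have hc : (n.descFactorial k : K) ≠ 0 :=
    Nat.cast_ne_zero.mpr (Nat.descFactorial_pos.mpr hk).ne'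
  calc ∑ ν ∈ range (n + 1), C ((ν.descFactorial k : K) / n.descFactorial k) *
        bernsteinPolynomial K n ν
      = C (n.descFactorial k : K)⁻¹ *
          ∑ ν ∈ range (n + 1), ν.descFactorial k • bernsteinPolynomial K n ν := by
        simp_rw [mul_sum, nsmul_eq_mul, div_eq_mul_inv, C_mul, map_natCast]
        exact sum_congr rfl fun _ _ => by ring
    _ = X ^ k := by
        rw [bernsteinPolynomial.sum_descFactorial_smul, nsmul_eq_mul, ← mul_assoc,
          ← map_natCast C, ← C_mul, inv_mul_cancel₀ hc, C_1, one_mul]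

theorem sum_C_bernsteinCoeff_mul_bernsteinPolynomial {n : ℕ} {p : K[X]}
    (hp : p.natDegree ≤ n) :
    ∑ ν ∈ range (n + 1), C (bernsteinCoeff n ν p) * bernsteinPolynomial K n ν = p := by
  simp_rw [bernsteinCoeff, map_sum, sum_mul]
  rw [sum_comm]
  conv_rhs => rw [p.as_sum_range_C_mul_X_pow' (Nat.lt_succ_of_le hp)]
  refine sum_congr rfl fun k hk => ?_
  simp_rw [C_mul, mul_comm (C _) (C (p.coeff k)), mul_assoc, ← mul_sum,
    bernsteinPolynomial.sum_C_descFactorial_div_mul (Nat.lt_succ_iff.mp (mem_range.mp hk))]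

end CharZero

theorem Finset.abs_prod_sub_prod_le {ι α : Type*} [CommRing α] [LinearOrder α]
    [IsStrictOrderedRing α] (s : Finset ι) {a b : ι → α} (ha : ∀ i ∈ s, a i ∈ Set.Icc 0 1)
    (hb : ∀ i ∈ s, b i ∈ Set.Icc 0 1) :
    |∏ i ∈ s, a i - ∏ i ∈ s, b i| ≤ ∑ i ∈ s, |a i - b i| := by
  classical
  induction s using Finset.induction_on with
  | empty => simp
  | insert j s hj ih =>
    simp only [Finset.forall_mem_insert] at ha hb
    rw [prod_insert hj, prod_insert hj, sum_insert hj]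
    have hpa : |∏ i ∈ s, a i| ≤ 1 := by
      rw [abs_le]; constructor
      · linarith [prod_nonneg fun i hi => (ha.2 i hi).1]
      · exact prod_le_one (fun i hi => (ha.2 i hi).1) fun i hi => (ha.2 i hi).2
    have hbj : |b j| ≤ 1 := abs_le.mpr ⟨by linarith [hb.1.1], hb.1.2⟩
    calc |a j * ∏ i ∈ s, a i - b j * ∏ i ∈ s, b i|
        = |(a j - b j) * ∏ i ∈ s, a i + b j * (∏ i ∈ s, a i - ∏ i ∈ s, b i)| := by ring_nf
      _ ≤ |a j - b j| * 1 + 1 * ∑ i ∈ s, |a i - b i| := by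
        refine (abs_add_le _ _).trans ?_
        rw [abs_mul, abs_mul]
        gcongr
        exact ih ha.2 hb.2
      _ = _ := by ring

theorem abs_natSub_div_sub_div_le {ν n j : ℕ} (hν : ν ≤ n) (hj : j < n) :
    |((ν - j : ℕ) : ℝ) / (n - j) - ν / n| ≤ j / (n - j) := by
  have hjn : (0 : ℝ) < n - j := sub_pos.mpr (by exact_mod_cast hj)
  have hn : (0 : ℝ) < n := Nat.cast_pos.mpr (Nat.zero_lt_of_lt hj)
  have hνn : (ν : ℝ) ≤ n := by exact_mod_cast hν
  rcases le_or_gt j ν with hjν | hνj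
  · have key : ((ν - j : ℕ) : ℝ) / (n - j) - ν / n = -(j / (n - j) * ((n - ν) / n)) := by
      push_cast [hjν]
      field_simp
      ring
    rw [key, abs_neg, abs_of_nonneg (by have := sub_nonneg.mpr hνn; positivity)]
    exact mul_le_of_le_one_right (by positivity)
      ((div_le_one hn).mpr (sub_le_self _ ν.cast_nonneg))
  · have hνj' : (ν : ℝ) ≤ j := by exact_mod_cast hνj.le
    rw [Nat.sub_eq_zero_of_le hνj.le, Nat.cast_zero, zero_div, zero_sub, abs_neg,
      abs_of_nonneg (by positivity)]
    calc (ν : ℝ) / n ≤ j / n := by gcongr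
      _ ≤ j / (n - j) := by gcongr; exact sub_le_self _ j.cast_nonneg

theorem abs_descFactorial_div_sub_pow_le {ν n k : ℕ} (hν : ν ≤ n) (hk : k ≤ n) :
    |(ν.descFactorial k : ℝ) / n.descFactorial k - (ν / n) ^ k| ≤ k ^ 2 / (n - k + 1) := by
  have hfactor : ∀ j ∈ range k, (n : ℝ) - k + 1 ≤ n - j := fun j hj => by
    have : (j : ℝ) + 1 ≤ k := by exact_mod_cast mem_range.mp hj
    linarith
  have hnk : (0 : ℝ) < n - k + 1 := by
    have : (k : ℝ) ≤ n := by exact_mod_cast hk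
    linarith
  have hprod : (ν.descFactorial k : ℝ) / n.descFactorial k =
      ∏ j ∈ range k, ((ν - j : ℕ) : ℝ) / (n - j) := by
    rw [Nat.descFactorial_eq_prod_range, Nat.descFactorial_eq_prod_range, Nat.cast_prod,
      Nat.cast_prod, ← prod_div_distrib]
    refine prod_congr rfl fun j hj => ?_
    rw [Nat.cast_sub (show j ≤ n by have := mem_range.mp hj; omega)]
  have hpow : ((ν : ℝ) / n) ^ k = ∏ _j ∈ range k, (ν / n : ℝ) := by
    rw [prod_const, card_range]
  rw [hprod, hpow]
  calc |∏ j ∈ range k, ((ν - j : ℕ) : ℝ) / (n - j) - ∏ j ∈ range k, (ν / n : ℝ)|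
      ≤ ∑ j ∈ range k, |((ν - j : ℕ) : ℝ) / (n - j) - ν / n| := by
        refine abs_prod_sub_prod_le _ (fun j hj => ⟨?_, ?_⟩) fun j hj => ⟨?_, ?_⟩
        · exact div_nonneg (Nat.cast_nonneg _) (hnk.trans_le (hfactor j hj)).le
        · refine div_le_one_of_le₀ ?_ (hnk.trans_le (hfactor j hj)).le
          rw [← Nat.cast_sub (show j ≤ n by have := mem_range.mp hj; omega)]
          exact_mod_cast Nat.sub_le_sub_right hν j
        · positivity
        · exact div_le_one_of_le₀ (by exact_mod_cast hν) (Nat.cast_nonneg _)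
    _ ≤ ∑ j ∈ range k, (k / (n - k + 1) : ℝ) := by
        refine sum_le_sum fun j hj => (abs_natSub_div_sub_div_le hν ?_).trans ?_
        · have := mem_range.mp hj; omega
        · have : (j : ℝ) ≤ k := by exact_mod_cast (mem_range.mp hj).le
          gcongr
          exact hfactor j hj
    _ = k ^ 2 / (n - k + 1) := by
        rw [sum_const, card_range, nsmul_eq_mul]
        ring

theorem abs_bernsteinCoeff_sub_eval_le {N d ν : ℕ} {p : ℝ[X]} (hN : 0 < N)
    (hp : p.natDegree ≤ d) (hν : ν ≤ N + d) :
    |bernsteinCoeff (N + d) ν p - p.eval (ν / (N + d) : ℝ)| ≤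
      d ^ 2 / N * p.sum fun _ a => |a| := by
  set n := N + d
  have hpn : p.natDegree < n + 1 := by omega
  have hweight : ∀ k ∈ range (n + 1),
      |((ν.descFactorial k : ℝ) / n.descFactorial k - (ν / n) ^ k) * p.coeff k| ≤
        d ^ 2 / N * |p.coeff k| := by
    intro k hk
    rw [abs_mul]
    rcases le_or_gt k d with hkd | hdk
    · gcongr
      refine (abs_descFactorial_div_sub_pow_le hν (by omega)).trans ?_
      have : (N : ℝ) + 1 ≤ n - k + 1 := by
        have : (k : ℝ) ≤ d := by exact_mod_cast hkd
        push_cast [n]; linarith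
      gcongr
      linarith
    · rw [coeff_eq_zero_of_natDegree_lt (hp.trans_lt hdk), abs_zero, mul_zero, mul_zero]
  have hx : (ν / (N + d) : ℝ) = ν / n := by push_cast [n]; rfl
  rw [hx, bernsteinCoeff, eval_eq_sum_range' hpn, sum_over_range' _ (fun _ => abs_zero) _ hpn,
    mul_sum, ← sum_sub_distrib]
  refine (abs_sum_le_sum_abs _ _).trans (sum_le_sum fun k hk => ?_)
  rw [mul_comm (p.coeff k), ← sub_mul]
  exact hweight k hk

section Matrix

variable {n : Type*} [Fintype n]

theorem Matrix.abs_dotProduct_mulVec_le (A : Matrix n n ℝ) (v : n → ℝ) :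
    |v ⬝ᵥ A *ᵥ v| ≤ (∑ i, ∑ j, |A i j|) * ‖v‖ ^ 2 := by
  have hv : ∀ i, |v i| ≤ ‖v‖ := fun i => by simpa using norm_le_pi_norm v i
  simp only [dotProduct, mulVec, mul_sum, sum_mul]
  refine (abs_sum_le_sum_abs _ _).trans (sum_le_sum fun i _ =>
    (abs_sum_le_sum_abs _ _).trans (sum_le_sum fun j _ => ?_))
  rw [abs_mul, abs_mul, sq]
  calc |v i| * (|A i j| * |v j|) ≤ ‖v‖ * (|A i j| * ‖v‖) := by gcongr <;> exact hv _
    _ = |A i j| * (‖v‖ * ‖v‖) := by ring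

theorem IsCompact.exists_pos_mul_sq_norm_le_dotProduct_mulVec {K : Set (Matrix n n ℝ)}
    (hK : IsCompact K) (hpos : ∀ A ∈ K, A.PosDef) :
    ∃ ε > 0, ∀ A ∈ K, ∀ v : n → ℝ, ε * ‖v‖ ^ 2 ≤ v ⬝ᵥ A *ᵥ v := by
  set S := K ×ˢ Metric.sphere (0 : n → ℝ) 1
  obtain ⟨ε, hε, hεS⟩ : ∃ ε > 0, ∀ z ∈ S, ε ≤ z.2 ⬝ᵥ z.1 *ᵥ z.2 := by
    rcases S.eq_empty_or_nonempty with hS | hS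
    · exact ⟨1, one_pos, by simp [hS]⟩
    · have hf : Continuous fun z : Matrix n n ℝ × (n → ℝ) => z.2 ⬝ᵥ z.1 *ᵥ z.2 :=
        continuous_snd.dotProduct (continuous_fst.matrix_mulVec continuous_snd)
      obtain ⟨z, ⟨hzK, hz⟩, hmin⟩ :=
        (hK.prod (isCompact_sphere 0 1)).exists_isMinOn hS hf.continuousOn
      have hz0 : z.2 ≠ 0 := ne_zero_of_mem_unit_sphere ⟨z.2, hz⟩
      exact ⟨_, by simpa using (hpos z.1 hzK).dotProduct_mulVec_pos hz0, hmin⟩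
  refine ⟨ε, hε, fun A hA v => ?_⟩
  rcases eq_or_ne v 0 with rfl | hv
  · simp
  have hv' : ‖v‖ ≠ 0 := norm_ne_zero_iff.mpr hv
  have := hεS (A, ‖v‖⁻¹ • v) ⟨hA, by simp [norm_smul, hv']⟩
  simp only [mulVec_smul, dotProduct_smul, smul_dotProduct, smul_eq_mul] at this
  calc ε * ‖v‖ ^ 2 ≤ ‖v‖⁻¹ * (‖v‖⁻¹ * (v ⬝ᵥ A *ᵥ v)) * ‖v‖ ^ 2 := by gcongr
    _ = v ⬝ᵥ A *ᵥ v := by field_simp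

theorem Matrix.posDef_of_sum_abs_sub_lt {A B : Matrix n n ℝ} {ε : ℝ} (hA : A.IsHermitian)
    (hB : ∀ v : n → ℝ, ε * ‖v‖ ^ 2 ≤ v ⬝ᵥ B *ᵥ v) (hAB : ∑ i, ∑ j, |A i j - B i j| < ε) :
    A.PosDef := by
  refine PosDef.of_dotProduct_mulVec_pos hA fun v hv => ?_
  have hv2 : 0 < ‖v‖ ^ 2 := by positivity
  have hsplit : v ⬝ᵥ A *ᵥ v = v ⬝ᵥ B *ᵥ v + v ⬝ᵥ (A - B) *ᵥ v := by
    rw [sub_mulVec, dotProduct_sub]; ring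
  have hdiff := abs_le.mp (abs_dotProduct_mulVec_le (A - B) v)
  simp only [sub_apply] at hdiff
  rw [star_trivial, hsplit]
  nlinarith [hB v, mul_lt_mul_of_pos_right hAB hv2]

end Matrix

theorem posDef_on_unit_interval_rep_general (t d : ℕ)
    (F : Matrix (Fin t) (Fin t) (Polynomial ℝ)) (hsymm : F.IsSymm)
    (hdegle : ∀ i j, (F i j).natDegree ≤ d)
    (hpos : ∀ x ∈ Set.Icc (0 : ℝ) 1, (F.map (Polynomial.eval x)).PosDef) :
    ∃ N : ℕ, 0 < N ∧ ∃ G : ℕ → Matrix (Fin t) (Fin t) ℝ,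
      (∀ i ∈ Finset.range (N + d + 1), (G i).PosDef) ∧
      F = ∑ i ∈ Finset.range (N + d + 1),
        ((Polynomial.X ^ i * (1 - Polynomial.X) ^ (N + d - i) : Polynomial ℝ)) •
          (G i).map Polynomial.C := by
  obtain ⟨ε, hε, hεF⟩ := (isCompact_Icc.image (continuous_matrix fun i j => (F i j).continuous)
    ).exists_pos_mul_sq_norm_le_dotProduct_mulVec (by rintro _ ⟨x, hx, rfl⟩; exact hpos x hx)
  set M := ∑ i, ∑ j, (F i j).sum fun _ a => |a|
  obtain ⟨N, hN, hNM⟩ : ∃ N : ℕ, 0 < N ∧ (d : ℝ) ^ 2 / N * M < ε :=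
    ((Filter.eventually_gt_atTop 0).and
      (((tendsto_const_div_atTop_nhds_zero_nat _).mul_const M).eventually
        (gt_mem_nhds (by rwa [zero_mul])))).exists
  refine ⟨N, hN, fun ν => ((N + d).choose ν : ℝ) • F.map (bernsteinCoeff (N + d) ν),
    fun ν hν => ?_, ?_⟩
  · have hν : ν ≤ N + d := Nat.lt_succ_iff.mp (mem_range.mp hν)
    have hx : (ν / (N + d) : ℝ) ∈ Set.Icc 0 1 :=
      ⟨by positivity, div_le_one_of_le₀ (by exact_mod_cast hν) (by positivity)⟩
    refine PosDef.smul ?_ (Nat.cast_pos.mpr (Nat.choose_pos hν))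
    refine posDef_of_sum_abs_sub_lt (isHermitian_iff_isSymm.mpr (hsymm.map _))
      (hεF _ ⟨_, hx, rfl⟩) (lt_of_le_of_lt ?_ hNM)
    refine (sum_le_sum fun i _ => sum_le_sum fun j _ =>
      abs_bernsteinCoeff_sub_eval_le hN (hdegle i j) hν).trans_eq ?_
    simp only [M, mul_sum]
  · refine Matrix.ext fun i j => ?_
    simp only [Matrix.sum_apply, Matrix.smul_apply, map_apply, smul_eq_mul]
    conv_lhs => rw [← sum_C_bernsteinCoeff_mul_bernsteinPolynomial
      ((hdegle i j).trans (Nat.le_add_left d N))]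
    refine sum_congr rfl fun ν _ => ?_
    rw [bernsteinPolynomial, C_mul, map_natCast]
    ring

/-- Bernstein-type representation on `[0,1]`: if the symmetric matrix
polynomial `F` has degree `d` and `F(x) ≻ 0` on `[0,1]`, then
`F = Σ_{i=0}^{N+d} Gᵢ xⁱ (1-x)^{N+d-i}` with all `Gᵢ` positive definite. -/
theorem posDef_on_unit_interval_rep (t d : ℕ)
    (F : Matrix (Fin t) (Fin t) (Polynomial ℝ)) (hsymm : F.IsSymm)
    (hdegle : ∀ i j, (F i j).natDegree ≤ d)
    (hdeg : ∃ i j, (F i j).coeff d ≠ 0)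
    (hpos : ∀ x ∈ Set.Icc (0 : ℝ) 1, (F.map (Polynomial.eval x)).PosDef) :
    ∃ N : ℕ, 0 < N ∧ ∃ G : ℕ → Matrix (Fin t) (Fin t) ℝ,
      (∀ i ∈ Finset.range (N + d + 1), (G i).PosDef) ∧
      F = ∑ i ∈ Finset.range (N + d + 1),
        ((Polynomial.X ^ i * (1 - Polynomial.X) ^ (N + d - i) : Polynomial ℝ)) •
          (G i).map Polynomial.C :=
  posDef_on_unit_interval_rep_general t d F hsymm hdegle hpos
end
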